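/- If there are countably infinitely many room configurations (transcripts, i.e., finite strings), then even with r > 1 rooms and arbitrary unknown initial configurations, the prisoners have a winning strategy: the append-your-name-and-visit-count strategy guarantees that under every valid schedule some prisoner eventually correctly concludes that every prisoner has visited every room, and no prisoner ever declares incorrectly. -/

import Mathlib

/-- A prisoner's observation history: the list of (configuration seen on entry,
configuration left on exit) for each of his visits so far. -/
abbrev Hist (C : Type) := List (C × C)

/-- A deterministic strategy: for each prisoner, a function from his history
and the configuration of the room he enters to the configuration he leaves the
room in, together with whether he declares. -/
abbrev Strategy (n : ℕ) (C : Type) := Fin n → Hist C → C → C × Bool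

/-- A schedule: who visits which room at each step. -/
abbrev Schedule (n r : ℕ) := ℕ → Fin n × Fin r

/-- Global state of an execution. -/
structure PState (n r : ℕ) (C : Type) where
  rooms : Fin r → C
  hist : Fin n → Hist C
  declared : Bool

/-- One visit of prisoner `v.1` to room `v.2`. -/
def pstep {n r : ℕ} {C : Type} (σ : Strategy n C) (v : Fin n × Fin r)
    (s : PState n r C) : PState n r C :=
  let cur := s.rooms v.2
  let a := σ v.1 (s.hist v.1) cur
  { rooms := Function.update s.rooms v.2 a.1
    hist := Function.update s.hist v.1 (s.hist v.1 ++ [(cur, a.1)])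
    declared := s.declared || a.2 }

/-- The state after `t` visits, starting from initial room configurations `init`. -/
def prun {n r : ℕ} {C : Type} (σ : Strategy n C) (sch : Schedule n r)
    (init : Fin r → C) : ℕ → PState n r C
  | 0 => ⟨init, fun _ => [], false⟩
  | t + 1 => pstep σ (sch t) (prun σ sch init t)

/-- A schedule is valid if every prisoner visits every room infinitely often. -/
def ValidSchedule {n r : ℕ} (sch : Schedule n r) : Prop :=
  ∀ (p : Fin n) (rm : Fin r), {t | sch t = (p, rm)}.Infinite

/-- Prisoner `p` has visited room `rm` within the first `t` visits. -/
def VisitedBy {n r : ℕ} (sch : Schedule n r) (t : ℕ) (p : Fin n) (rm : Fin r) : Prop :=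
  ∃ t' < t, sch t' = (p, rm)

/-- A strategy is winning for initial configurations `init` if under every
valid schedule some prisoner eventually declares, and every declaration occurs
only after each prisoner has visited every room at least once. -/
def Winning {n r : ℕ} {C : Type} (σ : Strategy n C) (init : Fin r → C) : Prop :=
  ∀ sch : Schedule n r, ValidSchedule sch →
    (∃ t, (prun σ sch init t).declared = true) ∧
    (∀ t, (prun σ sch init t).declared = true → ∀ p rm, VisitedBy sch t p rm)

/-!
Each visitor appends the entry `[name, count]`. Names are `< n` while a prisoner's counts are
eventually `≥ n`, so once a transcript is longer than every initial string, an entry `[p, k]` with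
`k ≥ n` can only be read at an aligned position, where it was written by `p`'s `k`-th visit.
Hence the only room whose transcript extends the exit transcript of such a visit is the room of
that visit. A prisoner declares after seeing `r` visits whose exit transcripts are pairwise not
prefixes of one another (so one in every room, which bounds all initial strings), then `r` such
visits with entry transcripts at least that long and counts `≥ n`, each followed by a visit whose
entry transcript extends its exit transcript by entries of all `n` prisoners.
-/

open Filter

def flatPairs (E : List (ℕ × ℕ)) : List ℕ := E.flatMap fun e => [e.1, e.2]

@[simp]
theorem flatPairs_nil : flatPairs [] = [] := rfl

@[simp]
theorem flatPairs_cons (e : ℕ × ℕ) (E : List (ℕ × ℕ)) :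
    flatPairs (e :: E) = e.1 :: e.2 :: flatPairs E := rfl

@[simp]
theorem flatPairs_append (E E' : List (ℕ × ℕ)) :
    flatPairs (E ++ E') = flatPairs E ++ flatPairs E' := List.flatMap_append

@[simp]
theorem length_flatPairs (E : List (ℕ × ℕ)) : (flatPairs E).length = 2 * E.length := by
  induction E with
  | nil => rfl
  | cons e E ih => simp [ih]; ring

theorem flatPairs_injective : Function.Injective flatPairs := by
  intro E E' h
  induction E generalizing E' with
  | nil => cases E' <;> simp_all
  | cons e E ih =>
    cases E' with
    | nil => simp at h
    | cons e' E' =>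
      simp only [flatPairs_cons, List.cons.injEq] at h
      rw [Prod.ext h.1 h.2.1, ih h.2.2]

theorem exists_suffix_of_append_eq_flatPairs {n x y : ℕ} {c w : List ℕ} {E : List (ℕ × ℕ)}
    (hE : ∀ e ∈ E, e.1 < n) (hy : n ≤ y) (h : c ++ x :: y :: w = flatPairs E) :
    ∃ E', (x, y) :: E' <:+ E ∧ w = flatPairs E' := by
  induction E generalizing c with
  | nil => simp at h
  | cons e E ih =>
    rcases c with _ | ⟨u, _ | ⟨v, c⟩⟩
    · simp only [List.nil_append, flatPairs_cons, List.cons.injEq] at h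
      obtain ⟨rfl, rfl, rfl⟩ := h
      exact ⟨E, List.suffix_refl _, rfl⟩
    · -- the count `y ≥ n` would be the name of the next entry
      rcases E with _ | ⟨e', E⟩
      · simp at h
      · simp only [List.cons_append, List.nil_append, flatPairs_cons, List.cons.injEq] at h
        have := hE e' (by simp)
        omega
    · simp only [List.cons_append, flatPairs_cons, List.cons.injEq] at h
      obtain ⟨E', hE', rfl⟩ := ih (fun e he => hE e (List.mem_cons_of_mem _ he)) h.2.2
      exact ⟨E', hE'.trans (List.suffix_cons _ _), rfl⟩

theorem exists_suffix_of_append_eq_append_flatPairs {n x y : ℕ} {c w init : List ℕ}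
    {E : List (ℕ × ℕ)} (hE : ∀ e ∈ E, e.1 < n) (hy : n ≤ y) (hc : init.length ≤ c.length)
    (h : c ++ x :: y :: w = init ++ flatPairs E) :
    ∃ E', (x, y) :: E' <:+ E ∧ w = flatPairs E' := by
  obtain ⟨c', rfl⟩ : init <+: c := List.prefix_of_prefix_length_le
    (by rw [h]; exact List.prefix_append _ _) (List.prefix_append _ _) hc
  rw [List.append_assoc, List.append_cancel_left_eq] at h
  exact exists_suffix_of_append_eq_flatPairs hE hy h

def Separated {r : ℕ} (h : Hist (List ℕ)) (a : Fin r → List ℕ × List ℕ) : Prop :=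
  (∀ b, a b ∈ h) ∧ Pairwise fun b b' => ¬ (a b).2 <+: (a b').2

def ReadyToDeclare (n r : ℕ) (h : Hist (List ℕ)) : Prop :=
  ∃ a A : Fin r → List ℕ × List ℕ, Separated h a ∧ Separated h A ∧
    (∀ b b', (a b).1.length ≤ (A b').1.length) ∧ (∀ b, n ≤ (A b).2.getLastD 0) ∧
    ∀ b, ∃ y ∈ h, ∃ E, y.1 = (A b).2 ++ flatPairs E ∧
      ∀ q : Fin n, ∃ k, ((q : ℕ), k) ∈ E

open Classical in
noncomputable def transcriptStrategy (n r : ℕ) : Strategy n (List ℕ) :=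
  fun p h c => (c ++ [(p : ℕ), h.length + 1], decide (ReadyToDeclare n r h))

theorem Nat.eventually_le_count {P : ℕ → Prop} [DecidablePred P] (hP : {t | P t}.Infinite)
    (K : ℕ) : ∀ᶠ t in atTop, K ≤ Nat.count P t :=
  eventually_atTop.2 ⟨Nat.nth P K, fun _ ht =>
    (Nat.count_nth_of_infinite hP K).symm.le.trans (Nat.count_monotone P ht)⟩

theorem prun_declared_iff {n r : ℕ} {C : Type} (σ : Strategy n C) (sch : Schedule n r)
    (init : Fin r → C) (t : ℕ) : (prun σ sch init t).declared = true ↔ ∃ s < t,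
      (σ (sch s).1 ((prun σ sch init s).hist (sch s).1)
        ((prun σ sch init s).rooms (sch s).2)).2 = true := by
  induction t with
  | zero => simp [prun]
  | succ t ih =>
    simp [prun, pstep, ih, le_iff_lt_or_eq, or_and_right, exists_or]

namespace Schedule

variable {n r : ℕ} (sch : Schedule n r) (init : Fin r → List ℕ)

def visitCount (p : Fin n) (t : ℕ) : ℕ := Nat.count (fun s => (sch s).1 = p) t

def entry (t : ℕ) : ℕ × ℕ := ((sch t).1, sch.visitCount (sch t).1 t + 1)

def roomLog (B : Fin r) (t : ℕ) : List (ℕ × ℕ) :=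
  ((List.range t).filter fun s => (sch s).2 = B).map sch.entry

/-- The transcript of room `B` after `t` visits under the append strategy (see `prun_rooms_eq_and_hist_eq`). -/
def content (t : ℕ) (B : Fin r) : List ℕ := init B ++ flatPairs (sch.roomLog B t)

def visitRecord (s : ℕ) : List ℕ × List ℕ :=
  (sch.content init s (sch s).2, sch.content init (s + 1) (sch s).2)

def records (t : ℕ) (p : Fin n) : Hist (List ℕ) :=
  ((List.range t).filter fun s => (sch s).1 = p).map (sch.visitRecord init)

variable {sch init}

theorem entry_injective : Function.Injective sch.entry := by
  intro s s' h
  simp only [entry, Prod.mk.injEq] at h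
  have hp : (sch s).1 = (sch s').1 := Fin.ext h.1
  exact Nat.count_injective (p := fun u => (sch u).1 = (sch s).1) rfl hp.symm
    (by simpa [visitCount, hp] using h.2)

theorem mem_roomLog {B : Fin r} {t : ℕ} {e : ℕ × ℕ} :
    e ∈ sch.roomLog B t ↔ ∃ s < t, (sch s).2 = B ∧ sch.entry s = e := by
  simp [roomLog, and_assoc]

theorem entry_mem_roomLog {B : Fin r} {s t : ℕ} :
    sch.entry s ∈ sch.roomLog B t ↔ s < t ∧ (sch s).2 = B := by
  simp [mem_roomLog, entry_injective.eq_iff]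

theorem fst_lt_of_mem_roomLog {B : Fin r} {t : ℕ} {e : ℕ × ℕ} (he : e ∈ sch.roomLog B t) :
    e.1 < n := by
  obtain ⟨s, -, -, rfl⟩ := mem_roomLog.1 he
  exact (sch s).1.isLt

theorem length_roomLog (B : Fin r) (t : ℕ) :
    (sch.roomLog B t).length = Nat.count (fun s => (sch s).2 = B) t := by
  simp [roomLog, Nat.count, List.countP_eq_length_filter]

theorem roomLog_add (B : Fin r) (s d : ℕ) :
    sch.roomLog B (s + d) = sch.roomLog B s ++
      (((List.range d).map (s + ·)).filter fun u => (sch u).2 = B).map sch.entry := by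
  simp [roomLog, List.range_add, List.filter_append]

theorem exists_content_eq_append {s t : ℕ} (hst : s ≤ t) (B : Fin r) :
    ∃ E, sch.content init t B = sch.content init s B ++ flatPairs E ∧
      ∀ u, s ≤ u → u < t → (sch u).2 = B → sch.entry u ∈ E := by
  obtain ⟨d, rfl⟩ := Nat.exists_eq_add_of_le hst
  refine ⟨(((List.range d).map (s + ·)).filter fun u => (sch u).2 = B).map sch.entry,
    by simp [content, roomLog_add], fun u hsu hut huB => ?_⟩
  simp only [List.mem_map, List.mem_filter, List.mem_range, decide_eq_true_eq]
  exact ⟨u, ⟨⟨u - s, by omega, by omega⟩, huB⟩, rfl⟩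

theorem content_prefix {s t : ℕ} (hst : s ≤ t) (B : Fin r) :
    sch.content init s B <+: sch.content init t B := by
  obtain ⟨E, hE, -⟩ := exists_content_eq_append (init := init) hst B
  exact hE ▸ List.prefix_append _ _

theorem content_succ (t : ℕ) (B : Fin r) : sch.content init (t + 1) B =
    sch.content init t B ++
      if (sch t).2 = B then [((sch t).1 : ℕ), sch.visitCount (sch t).1 t + 1] else [] := by
  split_ifs with h <;> simp [content, roomLog_add, h, entry]

theorem content_succ_of_eq {t : ℕ} {p : Fin n} {B : Fin r} (ht : sch t = (p, B)) :
    sch.content init (t + 1) B = sch.content init t B ++ [(p : ℕ), sch.visitCount p t + 1] := by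
  simp [content_succ, ht]

theorem visitRecord_of_eq {s : ℕ} {p : Fin n} {B : Fin r} (hs : sch s = (p, B)) :
    sch.visitRecord init s = (sch.content init s B, sch.content init (s + 1) B) := by
  simp [visitRecord, hs]

theorem mem_records {t : ℕ} {p : Fin n} {x : List ℕ × List ℕ} :
    x ∈ sch.records init t p ↔ ∃ s < t, (sch s).1 = p ∧ sch.visitRecord init s = x := by
  simp [records, and_assoc]

theorem length_records (t : ℕ) (p : Fin n) :
    (sch.records init t p).length = sch.visitCount p t := by
  simp [records, visitCount, Nat.count, List.countP_eq_length_filter]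

theorem records_succ (t : ℕ) (p : Fin n) : sch.records init (t + 1) p =
    sch.records init t p ++ if (sch t).1 = p then [sch.visitRecord init t] else [] := by
  split_ifs with h <;> simp [records, List.range_succ, h]

theorem prun_rooms_eq_and_hist_eq {σ : Strategy n (List ℕ)}
    (hσ : ∀ p h c, (σ p h c).1 = c ++ [(p : ℕ), h.length + 1]) (t : ℕ) :
    (prun σ sch init t).rooms = sch.content init t ∧
      (prun σ sch init t).hist = sch.records init t := by
  induction t with
  | zero => constructor <;> funext <;> simp [prun, content, roomLog, records]
  | succ t ih =>
    simp only [prun, pstep, hσ, ih.1, ih.2, length_records]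
    constructor
    · funext B
      rw [content_succ, Function.update_apply]
      split_ifs <;> simp_all
    · funext p
      rw [records_succ, Function.update_apply]
      split_ifs <;> simp_all [visitRecord, content_succ]

theorem declared_transcriptStrategy_iff {t : ℕ} :
    (prun (transcriptStrategy n r) sch init t).declared = true ↔
      ∃ s < t, ReadyToDeclare n r (sch.records init s (sch s).1) := by
  simp [prun_declared_iff, transcriptStrategy,
    (prun_rooms_eq_and_hist_eq (σ := transcriptStrategy n r) (fun _ _ _ => rfl) _).2]

theorem room_eq_of_content_succ_append_eq {s t : ℕ} {p : Fin n} {B₀ B : Fin r} {w : List ℕ}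
    (hs : sch s = (p, B₀)) (hinit : (init B).length ≤ (sch.content init s B₀).length)
    (hcount : n ≤ sch.visitCount p s + 1)
    (h : sch.content init (s + 1) B₀ ++ w = sch.content init t B) :
    B₀ = B ∧ ∃ E, w = flatPairs E ∧ ∀ e ∈ E, e ∈ sch.roomLog B t := by
  rw [content_succ_of_eq hs, List.append_assoc] at h
  obtain ⟨E, hE, rfl⟩ := exists_suffix_of_append_eq_append_flatPairs
    (fun _ => fst_lt_of_mem_roomLog) hcount hinit h
  have hentry : sch.entry s = ((p : ℕ), sch.visitCount p s + 1) := by simp [entry, hs]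
  have hmem := hE.subset List.mem_cons_self
  rw [← hentry, entry_mem_roomLog, hs] at hmem
  exact ⟨hmem.2, E, rfl, fun e he => hE.subset (List.mem_cons_of_mem _ he)⟩

/-- As transcripts only grow, separated visits were made to pairwise distinct rooms. -/
theorem _root_.Separated.exists_visitRecord_eq {t : ℕ} {p : Fin n} {a : Fin r → List ℕ × List ℕ}
    (ha : Separated (sch.records init t p) a) (B : Fin r) :
    ∃ b s, s < t ∧ sch s = (p, B) ∧ sch.visitRecord init s = a b := by
  choose s hst hsp hsa using fun b => mem_records.1 (ha.1 b)
  have hinj : Function.Injective fun b => (sch (s b)).2 := by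
    intro b b' (hB : (sch (s b)).2 = (sch (s b')).2)
    by_contra hbb'
    wlog hle : s b ≤ s b' generalizing b b'
    · exact this hB.symm (Ne.symm hbb') (le_of_not_ge hle)
    apply ha.2 hbb'
    rw [← hsa b, ← hsa b']
    simp only [visitRecord]
    rw [hB]
    exact content_prefix (by omega) _
  obtain ⟨b, hb⟩ := Finite.injective_iff_surjective.1 hinj B
  exact ⟨b, s b, hst b, Prod.ext (hsp b) hb, hsa b⟩

theorem visitedBy_of_readyToDeclare {t : ℕ} {p : Fin n}
    (hc : ReadyToDeclare n r (sch.records init t p)) (q : Fin n) (B : Fin r) :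
    VisitedBy sch t q B := by
  obtain ⟨a, A, (ha : Separated _ a), (hA : Separated _ A), hlen, hcount, hgap⟩ := hc
  have hinit : ∀ B' b, (init B').length ≤ (A b).1.length := by
    intro B' b
    obtain ⟨b', s, -, hs, hsa⟩ := ha.exists_visitRecord_eq B'
    calc (init B').length ≤ (sch.content init s B').length := (List.prefix_append _ _).length_le
      _ ≤ (A b).1.length := by simpa [← hsa, visitRecord_of_eq hs] using hlen b' b
  obtain ⟨b, s, -, hs, hsA⟩ := hA.exists_visitRecord_eq B
  obtain ⟨y, hy, E, hyE, hE⟩ := hgap b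
  obtain ⟨s', hs't, -, rfl⟩ := mem_records.1 hy
  have hAb : A b = (sch.content init s B, sch.content init (s + 1) B) := by
    rw [← hsA, visitRecord_of_eq hs]
  rw [hAb] at hyE
  obtain ⟨hB, E', hEE', hE'⟩ := room_eq_of_content_succ_append_eq hs
    (by simpa [hAb] using hinit _ b) (by simpa [hAb, content_succ_of_eq hs] using hcount b) hyE.symm
  obtain ⟨k, hk⟩ := hE q
  obtain ⟨u, hu, huB, hue⟩ := mem_roomLog.1 (hE' _ (flatPairs_injective hEE' ▸ hk))
  exact ⟨u, hu.trans hs't, Prod.ext (Fin.ext (congrArg Prod.fst hue)) (huB.trans hB.symm)⟩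

theorem separated_records {t : ℕ} {p : Fin n} {g : Fin r → ℕ}
    (hg : ∀ b, sch (g b) = (p, b)) (hgt : ∀ b, g b < t)
    (hcount : ∀ b, n ≤ sch.visitCount p (g b) + 1)
    (hinit : ∀ B b, (init B).length ≤ (sch.content init (g b) b).length) :
    Separated (sch.records init t p) fun b => sch.visitRecord init (g b) := by
  refine ⟨fun b => mem_records.2 ⟨g b, hgt b, by rw [hg], rfl⟩, fun b b' hbb' ⟨w, hw⟩ => hbb' ?_⟩
  dsimp only at hw
  rw [visitRecord_of_eq (hg b), visitRecord_of_eq (hg b')] at hw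
  exact (room_eq_of_content_succ_append_eq (hg b) (hinit b' b) (hcount b) hw).1

theorem exists_content_eq_append_of_forall_visit {s t : ℕ} {B : Fin r} (hst : s < t)
    (hvisit : ∀ q : Fin n, ∃ u, s < u ∧ u < t ∧ sch u = (q, B)) :
    ∃ E, sch.content init t B = sch.content init (s + 1) B ++ flatPairs E ∧
      ∀ q : Fin n, ∃ k, ((q : ℕ), k) ∈ E := by
  obtain ⟨E, hE, hmem⟩ := exists_content_eq_append (init := init) hst B
  refine ⟨E, hE, fun q => ?_⟩
  obtain ⟨u, hsu, hut, hu⟩ := hvisit q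
  exact ⟨_, by simpa [entry, hu] using hmem u hsu hut (by rw [hu])⟩

theorem readyToDeclare_records {t : ℕ} {p : Fin n} {ga gA gj : Fin r → ℕ}
    (hga : ∀ b, sch (ga b) = (p, b)) (hgA : ∀ b, sch (gA b) = (p, b))
    (hgj : ∀ b, sch (gj b) = (p, b)) (hlt : ∀ b, ga b < t ∧ gA b < t ∧ gj b < t)
    (hcount : ∀ b, n ≤ sch.visitCount p (ga b) + 1 ∧ n ≤ sch.visitCount p (gA b) + 1)
    (hinit : ∀ B b, (init B).length ≤ (sch.content init (ga b) b).length)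
    (hlen : ∀ b b', (sch.content init (ga b) b).length ≤ (sch.content init (gA b') b').length)
    (hvisit : ∀ b (q : Fin n), ∃ u, gA b < u ∧ u < gj b ∧ sch u = (q, b)) :
    ReadyToDeclare n r (sch.records init t p) := by
  have hAj : ∀ b, gA b < gj b := fun b => by
    obtain ⟨u, hAu, huj, -⟩ := hvisit b p
    exact hAu.trans huj
  choose E hE hEq using fun b =>
    exists_content_eq_append_of_forall_visit (init := init) (hAj b) (hvisit b)
  refine ⟨fun b => sch.visitRecord init (ga b), fun b => sch.visitRecord init (gA b),
    separated_records hga (fun b => (hlt b).1) (fun b => (hcount b).1) hinit,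
    separated_records hgA (fun b => (hlt b).2.1) (fun b => (hcount b).2)
      (fun B b => (hinit B b).trans (hlen b b)),
    fun b b' => ?_, fun b => ?_, fun b => ⟨sch.visitRecord init (gj b), ?_, E b, ?_, hEq b⟩⟩
  · simpa [visitRecord_of_eq (hga b), visitRecord_of_eq (hgA b')] using hlen b b'
  · simpa [visitRecord_of_eq (hgA b), content_succ_of_eq (hgA b)] using (hcount b).2
  · exact mem_records.2 ⟨gj b, (hlt b).2.2, by rw [hgj b], rfl⟩
  · simp [visitRecord_of_eq (hgj b), visitRecord_of_eq (hgA b), hE b]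

end Schedule

namespace ValidSchedule

open Schedule

variable {n r : ℕ} {sch : Schedule n r}

theorem frequently_eq (hsch : ValidSchedule sch) (p : Fin n) (B : Fin r) :
    ∃ᶠ t in atTop, sch t = (p, B) :=
  Nat.frequently_atTop_iff_infinite.2 (hsch p B)

theorem eventually_le_visitCount (hsch : ValidSchedule sch) (p : Fin n) (K : ℕ) :
    ∀ᶠ t in atTop, K ≤ sch.visitCount p t :=
  Nat.eventually_le_count ((hsch p (sch 0).2).mono fun _ ht => congrArg Prod.fst ht) K

theorem eventually_le_length_content (hsch : ValidSchedule sch) (init : Fin r → List ℕ)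
    (K : ℕ) : ∀ᶠ t in atTop, ∀ B, K ≤ (sch.content init t B).length :=
  eventually_all.2 fun B =>
    (Nat.eventually_le_count (P := fun s => (sch s).2 = B)
      ((hsch (sch 0).1 B).mono fun t (ht : sch t = _) => show (sch t).2 = B by rw [ht]) K).mono
      fun t ht => by simp only [content, List.length_append, length_flatPairs,
        length_roomLog]; omega

theorem exists_readyToDeclare (hsch : ValidSchedule sch) (init : Fin r → List ℕ) :
    ∃ t, ReadyToDeclare n r (sch.records init t (sch t).1) := by
  set p := (sch 0).1
  have hlate : ∀ᶠ s in atTop, n ≤ sch.visitCount p s + 1 ∧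
      ∀ B b, (init B).length ≤ (sch.content init s b).length :=
    ((hsch.eventually_le_visitCount p n).mono fun _ h => h.trans (Nat.le_succ _)).and
      (eventually_all.2 fun B => hsch.eventually_le_length_content init _)
  choose ga hga hlga using fun b => ((hsch.frequently_eq p b).and_eventually hlate).exists
  choose gA hgA hlgA using fun b => ((hsch.frequently_eq p b).and_eventually (hlate.and
    (eventually_all.2 fun b' => hsch.eventually_le_length_content init
      (sch.content init (ga b') b').length))).exists
  choose u hu hgAu using fun b q =>
    ((hsch.frequently_eq q b).and_eventually (eventually_gt_atTop (gA b))).exists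
  choose gj hgj hugj using fun b => ((hsch.frequently_eq p b).and_eventually
    (eventually_all.2 fun q => eventually_gt_atTop (u b q))).exists
  obtain ⟨t, ht, hlt⟩ := ((hsch.frequently_eq p (sch 0).2).and_eventually
    (eventually_all.2 fun b => (eventually_gt_atTop (ga b)).and
      ((eventually_gt_atTop (gA b)).and (eventually_gt_atTop (gj b))))).exists
  refine ⟨t, ?_⟩
  rw [ht]
  exact readyToDeclare_records hga hgA hgj hlt (fun b => ⟨(hlga b).1, (hlgA b).1.1⟩)
    (fun B b => (hlga b).2 B b) (fun b b' => (hlgA b').2 b b')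
    fun b q => ⟨u b q, hgAu b q, hugj b q, hu b q⟩

end ValidSchedule

theorem infinite_configurations_winning_general (n r : ℕ) :
    ∃ σ : Strategy n (List ℕ),
      (∀ (p : Fin n) (h : Hist (List ℕ)) (c : List ℕ),
          (σ p h c).1 = c ++ [(p : ℕ), h.length + 1]) ∧
      (∀ init : Fin r → List ℕ, Winning σ init) := by
  refine ⟨transcriptStrategy n r, fun _ _ _ => rfl, fun init sch hsch => ⟨?_, ?_⟩⟩
  · obtain ⟨t, ht⟩ := hsch.exists_readyToDeclare init
    exact ⟨t + 1, Schedule.declared_transcriptStrategy_iff.2 ⟨t, t.lt_add_one, ht⟩⟩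
  · intro t ht q B
    obtain ⟨s, hst, hs⟩ := Schedule.declared_transcriptStrategy_iff.1 ht
    obtain ⟨u, hus, hu⟩ := Schedule.visitedBy_of_readyToDeclare hs q B
    exact ⟨u, hus.trans hst, hu⟩

/-- with countably infinitely many room configurations (finite
strings, i.e., transcripts), even with arbitrary unknown initial configurations
the prisoners have a winning strategy, namely the strategy where each visiting
prisoner appends his name followed by his current visit count to the room's
transcript. -/
theorem infinite_configurations_winning (n r : ℕ) (hn : 0 < n) (hr : 1 < r) :
    ∃ σ : Strategy n (List ℕ),
      (∀ (p : Fin n) (h : Hist (List ℕ)) (c : List ℕ),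
          (σ p h c).1 = c ++ [(p : ℕ), h.length + 1]) ∧
      (∀ init : Fin r → List ℕ, Winning σ init) :=
  infinite_configurations_winning_general n r
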